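/- Assume p > 2 and r odd with l' = (r-1)/2, l = l'+1. Let β ∈ M_N(o_r), let J ⊆ K^{l'} be a subgroup containing K^l whose image in K^{l'}/K^l is an isotropic subspace for the form B_β, and define f : K^{l'} → ℂ^× by f(1 + π^{l'}x) = ψ(π^{-r}tr(β·(π^{l'}x − (1/2)π^{2l'}x²))). Then the restriction of f to J is a group homomorphism. -/

import Mathlib

open IsLocalRing

/-- The principal congruence subgroup `1 + J^i · M_N(R)` inside `GL_N(R)`,
for an ideal `J` of a commutative ring `R`. -/
def congrSubgroup (N : ℕ) (R : Type) [CommRing R] (J : Ideal R) (i : ℕ) :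
    Subgroup (GL (Fin N) R) where
  carrier := {u | ∀ a b, ((u : Matrix (Fin N) (Fin N) R) - 1) a b ∈ J ^ i}
  one_mem' := by intro a b; simp
  mul_mem' := by
    intro u v hu hv a b
    have h : ((↑(u * v) : Matrix (Fin N) (Fin N) R) - 1)
        = ((↑u : Matrix (Fin N) (Fin N) R) - 1) * ((↑v : Matrix (Fin N) (Fin N) R) - 1)
          + (((↑u : Matrix (Fin N) (Fin N) R) - 1) + ((↑v : Matrix (Fin N) (Fin N) R) - 1)) := by
      rw [Units.val_mul]; noncomm_ring
    rw [h, Matrix.add_apply, Matrix.add_apply]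
    refine Ideal.add_mem _ ?_ (Ideal.add_mem _ (hu a b) (hv a b))
    rw [Matrix.mul_apply]
    exact Ideal.sum_mem _ fun c _ => Ideal.mul_mem_left _ _ (hv c b)
  inv_mem' := by
    intro u hu a b
    have h : ((↑u⁻¹ : Matrix (Fin N) (Fin N) R) - 1)
        = -((↑u⁻¹ : Matrix (Fin N) (Fin N) R) * ((↑u : Matrix (Fin N) (Fin N) R) - 1)) := by
      have huu : (↑u⁻¹ : Matrix (Fin N) (Fin N) R) * (↑u : Matrix (Fin N) (Fin N) R) = 1 := by
        rw [← Units.val_mul, inv_mul_cancel, Units.val_one]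
      noncomm_ring [huu]
    rw [h, Matrix.neg_apply, Matrix.mul_apply]
    exact neg_mem (Ideal.sum_mem _ fun c _ => Ideal.mul_mem_left _ _ (hu c b))

/-- The function `f(1 + π^{l'}x) = ψ(π^{-r} tr(β(π^{l'}x - ½π^{2l'}x²)))` on `K^{l'}`,
written in terms of `u = 1 + π^{l'}x` as
`f(u) = ψ(π^{-r} tr(β((u-1) - ½(u-1)²)))`, computed by lifting the trace to `o` via a
section `sec`. Here `half` is the inverse of `2` in `𝔬_r`. -/
noncomputable def psiLog (o : Type) [CommRing o] [IsDomain o] [IsDiscreteValuationRing o]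
    (N r : ℕ) (ψ : FractionRing o → ℂˣ)
    (sec : (o ⧸ (IsLocalRing.maximalIdeal o) ^ r) → o) (π : o)
    (half : o ⧸ (IsLocalRing.maximalIdeal o) ^ r)
    (β : Matrix (Fin N) (Fin N) (o ⧸ (IsLocalRing.maximalIdeal o) ^ r))
    (u : GL (Fin N) (o ⧸ (IsLocalRing.maximalIdeal o) ^ r)) : ℂˣ :=
  ψ (algebraMap o (FractionRing o)
      (sec (Matrix.trace (β *
        (((u : Matrix (Fin N) (Fin N) _) - 1) -
          half • (((u : Matrix (Fin N) (Fin N) _) - 1) *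
            ((u : Matrix (Fin N) (Fin N) _) - 1)))))) /
    (algebraMap o (FractionRing o) π) ^ r)

/-!
Writing `u = 1 + x`, `v = 1 + y` with `x, y ∈ π^{l'} M_N(𝔬_r)`, every product of three of
`x, y` vanishes since `3l' ≥ r`. Hence the truncated logarithm `L(x) = x - x²/2` satisfies
`L(xy + x + y) = L(x) + L(y) + [x, y]/2`, and the isotropy of `J` kills `tr(β[x, y])`.
So `u ↦ tr(β L(u - 1))` is additive on `J`, and `a ↦ ψ(π^{-r} a)` is a character of `𝔬_r`.
-/

theorem Matrix.mul_apply_mem_mul {R n : Type*} [CommRing R] [Fintype n] {I J : Ideal R}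
    {A B : Matrix n n R} (hA : ∀ i j, A i j ∈ I) (hB : ∀ i j, B i j ∈ J) (i j : n) :
    (A * B) i j ∈ I * J :=
  Ideal.sum_mem _ fun k _ => Ideal.mul_mem_mul (hA i k) (hB k j)

theorem Matrix.mul_mul_eq_zero_of_mem_pow {R n : Type*} [CommRing R] [Fintype n] {I : Ideal R}
    {a b c : ℕ} (hI : I ^ (a + b + c) = ⊥) {A B C : Matrix n n R} (hA : ∀ i j, A i j ∈ I ^ a)
    (hB : ∀ i j, B i j ∈ I ^ b) (hC : ∀ i j, C i j ∈ I ^ c) : A * B * C = 0 := by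
  ext i j
  have h := Matrix.mul_apply_mem_mul (Matrix.mul_apply_mem_mul hA hB) hC i j
  rwa [← pow_add, ← pow_add, hI, Ideal.mem_bot] at h

theorem Ideal.map_quotient_pow_eq_bot {R : Type*} [CommRing R] (P : Ideal R) {r n : ℕ}
    (hrn : r ≤ n) : (P.map (Ideal.Quotient.mk (P ^ r))) ^ n = ⊥ := by
  rw [← Ideal.map_pow, Ideal.map_eq_bot_iff_le_ker, Ideal.mk_ker]
  exact Ideal.pow_le_pow_right hrn

/-- The truncated logarithm `log (1 + x) ≈ x - x² / 2`, with `half` standing for `1 / 2`. -/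
def truncLog {S A : Type*} [Ring A] [SMul S A] (half : S) (x : A) : A := x - half • (x * x)

/-- Here `1 + (x * y + x + y) = (1 + x) * (1 + y)`. -/
theorem truncLog_mul_add_add {S A : Type*} [CommRing S] [Ring A] [Module S A] {half : S}
    (hhalf : 2 * half = 1) {x y : A} (hxyx : x * y * x = 0) (hxyy : x * y * y = 0)
    (hxxy : x * x * y = 0) (hyxy : y * x * y = 0) :
    truncLog half (x * y + x + y)
      = truncLog half x + truncLog half y + half • (x * y - y * x) := by
  have hsq : (x * y + x + y) * (x * y + x + y) = x * x + y * y + (x * y + y * x) := by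
    have hexpand : (x * y + x + y) * (x * y + x + y)
        = x * x + y * y + (x * y + y * x)
          + ((x * y * x) * y + x * y * x + x * y * y + x * x * y + y * x * y) := by
      noncomm_ring
    rw [hexpand, hxyx, hxyy, hxxy, hyxy]
    simp
  unfold truncLog
  rw [hsq]
  linear_combination (norm := module) -(hhalf • (x * y))

/-- The lifts of `a + b` and of `a`, `b` differ by a multiple of `π^r`, which `ψ` no longer sees
after division by `π^r`. -/
theorem map_sec_add_div_pow {o K M : Type*} [CommRing o] [Field K] [Algebra o K] [Monoid M]
    {ψ : K → M} (hψadd : ∀ a b, ψ (a + b) = ψ a * ψ b) (hψo : ∀ a : o, ψ (algebraMap o K a) = 1)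
    {π : o} (hπ : algebraMap o K π ≠ 0) {r : ℕ} {P : Ideal o} (hP : P ≤ Ideal.span {π ^ r})
    {sec : o ⧸ P → o} (hsec : ∀ a, Ideal.Quotient.mk P (sec a) = a) (a b : o ⧸ P) :
    ψ (algebraMap o K (sec (a + b)) / algebraMap o K π ^ r)
      = ψ (algebraMap o K (sec a) / algebraMap o K π ^ r)
        * ψ (algebraMap o K (sec b) / algebraMap o K π ^ r) := by
  have hmem : sec (a + b) - (sec a + sec b) ∈ P := by
    rw [← Ideal.Quotient.eq_zero_iff_mem, map_sub, map_add, hsec, hsec, hsec, sub_self]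
  obtain ⟨c, hc⟩ := Ideal.mem_span_singleton.mp (hP hmem)
  rw [eq_add_of_sub_eq hc, map_add, map_add, map_mul, map_pow, add_div, add_div,
    mul_div_cancel_left₀ _ (pow_ne_zero r hπ), hψadd, hψadd, hψo, one_mul]

theorem psiLog_eq_truncLog (o : Type) [CommRing o] [IsDomain o] [IsDiscreteValuationRing o]
    (N r : ℕ) (ψ : FractionRing o → ℂˣ) (sec : (o ⧸ maximalIdeal o ^ r) → o) (π : o)
    (half : o ⧸ maximalIdeal o ^ r) (β : Matrix (Fin N) (Fin N) (o ⧸ maximalIdeal o ^ r))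
    (u : GL (Fin N) (o ⧸ maximalIdeal o ^ r)) :
    psiLog o N r ψ sec π half β u
      = ψ (algebraMap o (FractionRing o)
          (sec (β * truncLog half ((u : Matrix (Fin N) (Fin N) _) - 1)).trace) /
        algebraMap o (FractionRing o) π ^ r) :=
  rfl

theorem algebraMap_ne_zero_of_maximalIdeal_eq_span (o : Type) [CommRing o] [IsDomain o]
    [IsDiscreteValuationRing o] {π : o} (hπ : maximalIdeal o = Ideal.span {π}) :
    algebraMap o (FractionRing o) π ≠ 0 := by
  refine (map_ne_zero_iff _ (IsFractionRing.injective o (FractionRing o))).mpr fun h0 => ?_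
  apply IsDiscreteValuationRing.not_a_field o
  rw [hπ, h0, Ideal.span_singleton_eq_bot]

theorem psiLog_restriction_is_hom_general
    (o : Type) [CommRing o] [IsDomain o] [IsDiscreteValuationRing o]
    (N r : ℕ) (hr : 2 ≤ r)
    (π : o) (hπ : maximalIdeal o = Ideal.span {π})
    (l' : ℕ) (hodd : 2 * l' + 1 = r)
    (half : o ⧸ (maximalIdeal o) ^ r) (hhalf : 2 * half = 1)
    (ψ : FractionRing o → ℂˣ)
    (hψadd : ∀ a b : FractionRing o, ψ (a + b) = ψ a * ψ b)
    (hψo : ∀ a : o, ψ (algebraMap o (FractionRing o) a) = 1)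
    (sec : (o ⧸ (maximalIdeal o) ^ r) → o)
    (hsec : ∀ a, Ideal.Quotient.mk ((maximalIdeal o) ^ r) (sec a) = a)
    (β : Matrix (Fin N) (Fin N) (o ⧸ (maximalIdeal o) ^ r))
    (J : Subgroup (GL (Fin N) (o ⧸ (maximalIdeal o) ^ r)))
    (hJup : J ≤ congrSubgroup N _
      ((maximalIdeal o).map (Ideal.Quotient.mk ((maximalIdeal o) ^ r))) l')
    (hiso : ∀ u ∈ J, ∀ v ∈ J,
      Matrix.trace (β *
        (((u : Matrix (Fin N) (Fin N) (o ⧸ (maximalIdeal o) ^ r)) - 1) *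
            ((v : Matrix (Fin N) (Fin N) (o ⧸ (maximalIdeal o) ^ r)) - 1) -
          ((v : Matrix (Fin N) (Fin N) (o ⧸ (maximalIdeal o) ^ r)) - 1) *
            ((u : Matrix (Fin N) (Fin N) (o ⧸ (maximalIdeal o) ^ r)) - 1))) = 0) :
    ∀ u ∈ J, ∀ v ∈ J,
      psiLog o N r ψ sec π half β (u * v)
        = psiLog o N r ψ sec π half β u * psiLog o N r ψ sec π half β v := by
  intro u hu v hv
  have hcube : ((maximalIdeal o).map (Ideal.Quotient.mk (maximalIdeal o ^ r))) ^ (l' + l' + l')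
      = ⊥ := Ideal.map_quotient_pow_eq_bot _ (by omega)
  have hx := hJup hu
  have hy := hJup hv
  have hlog := truncLog_mul_add_add hhalf (Matrix.mul_mul_eq_zero_of_mem_pow hcube hx hy hx)
    (Matrix.mul_mul_eq_zero_of_mem_pow hcube hx hy hy)
    (Matrix.mul_mul_eq_zero_of_mem_pow hcube hx hx hy)
    (Matrix.mul_mul_eq_zero_of_mem_pow hcube hy hx hy)
  have hP : maximalIdeal o ^ r ≤ Ideal.span {π ^ r} := by rw [hπ, Ideal.span_singleton_pow]
  have hprod : ((u * v : GL (Fin N) _) : Matrix (Fin N) (Fin N) (o ⧸ maximalIdeal o ^ r)) - 1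
      = (u - 1) * (v - 1) + (u - 1) + (v - 1) := by
    rw [Units.val_mul]; noncomm_ring
  simp only [psiLog_eq_truncLog, hprod, hlog, Matrix.mul_add, Matrix.trace_add,
    Matrix.mul_smul, Matrix.trace_smul, hiso u hu v hv, smul_zero, add_zero]
  exact map_sec_add_div_pow hψadd hψo (algebraMap_ne_zero_of_maximalIdeal_eq_span o hπ) hP hsec _ _

/-- Assume `p > 2` and `r` odd. If `J ⊆ K^{l'}` contains `K^l` and its image in
`K^{l'}/K^l` is isotropic for `B_β`, then `f(1+π^{l'}x) = ψ(π^{-r}tr(β(π^{l'}x - ½π^{2l'}x²)))`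
restricts to a group homomorphism on `J`. The isotropy of the image of `J` is expressed by
the vanishing of `tr(β((u-1)(v-1) - (v-1)(u-1)))` in `𝔬_r` (note `2l' + 1 = r`). -/
theorem psiLog_restriction_is_hom
    (o : Type) [CommRing o] [IsDomain o] [IsDiscreteValuationRing o]
    [Finite (ResidueField o)] (N r : ℕ) (hN : 2 ≤ N) (hr : 2 ≤ r)
    (π : o) (hπ : maximalIdeal o = Ideal.span {π})
    (l l' : ℕ) (hodd : 2 * l' + 1 = r) (hl : l = l' + 1)
    (half : o ⧸ (maximalIdeal o) ^ r) (hhalf : 2 * half = 1)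
    (ψ : FractionRing o → ℂˣ)
    (hψadd : ∀ a b : FractionRing o, ψ (a + b) = ψ a * ψ b)
    (hψo : ∀ a : o, ψ (algebraMap o (FractionRing o) a) = 1)
    (hψp : ∃ a : o, ψ (algebraMap o (FractionRing o) a / algebraMap o (FractionRing o) π) ≠ 1)
    (sec : (o ⧸ (maximalIdeal o) ^ r) → o)
    (hsec : ∀ a, Ideal.Quotient.mk ((maximalIdeal o) ^ r) (sec a) = a)
    (β : Matrix (Fin N) (Fin N) (o ⧸ (maximalIdeal o) ^ r))
    (J : Subgroup (GL (Fin N) (o ⧸ (maximalIdeal o) ^ r)))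
    (hJup : J ≤ congrSubgroup N _
      ((maximalIdeal o).map (Ideal.Quotient.mk ((maximalIdeal o) ^ r))) l')
    (hJdown : congrSubgroup N _
      ((maximalIdeal o).map (Ideal.Quotient.mk ((maximalIdeal o) ^ r))) l ≤ J)
    (hiso : ∀ u ∈ J, ∀ v ∈ J,
      Matrix.trace (β *
        (((u : Matrix (Fin N) (Fin N) (o ⧸ (maximalIdeal o) ^ r)) - 1) *
            ((v : Matrix (Fin N) (Fin N) (o ⧸ (maximalIdeal o) ^ r)) - 1) -
          ((v : Matrix (Fin N) (Fin N) (o ⧸ (maximalIdeal o) ^ r)) - 1) *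
            ((u : Matrix (Fin N) (Fin N) (o ⧸ (maximalIdeal o) ^ r)) - 1))) = 0) :
    ∀ u ∈ J, ∀ v ∈ J,
      psiLog o N r ψ sec π half β (u * v)
        = psiLog o N r ψ sec π half β u * psiLog o N r ψ sec π half β v :=
  psiLog_restriction_is_hom_general o N r hr π hπ l' hodd half hhalf ψ hψadd hψo sec hsec β J hJup
    hiso
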